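/- Let L be a c-lattice, j the meet of all prime elements of L, and 𝔛 = (j] an M-closed subset. A proper element i of L is an 𝔛-element if and only if i is a primary element of L and √i = j. -/

import Mathlib

/-- A multiplicative lattice: a complete lattice with a commutative, associative
multiplication distributing over arbitrary joins, with top as identity. -/
class MultiplicativeLattice (L : Type*) extends CompleteLattice L, CommMonoid L where
  mul_sSup : ∀ (a : L) (S : Set L), a * sSup S = ⨆ b ∈ S, a * b
  one_eq_top : (1 : L) = ⊤

namespace MultiplicativeLattice

variable {L : Type*}

/-- A subset is M-closed if it is closed under multiplication. -/
def MClosed [MultiplicativeLattice L] (X : Set L) : Prop :=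
  ∀ a ∈ X, ∀ b ∈ X, a * b ∈ X

/-- A proper element `i` is an `X`-element if `a * b ≤ i` and `a ∉ X` imply `b ≤ i`. -/
def IsXElement [MultiplicativeLattice L] (X : Set L) (i : L) : Prop :=
  i ≠ ⊤ ∧ ∀ a b : L, a * b ≤ i → a ∉ X → b ≤ i

/-- A prime element. -/
def IsPrime [MultiplicativeLattice L] (p : L) : Prop :=
  p ≠ ⊤ ∧ ∀ a b : L, a * b ≤ p → a ≤ p ∨ b ≤ p

/-- The residual `(i : a) = ⋁ {x | x * a ≤ i}`. -/
def residual [MultiplicativeLattice L] (i a : L) : L := sSup {x : L | x * a ≤ i}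

/-- The radical of an element. -/
def radical [MultiplicativeLattice L] (a : L) : L :=
  sSup {x : L | IsCompactElement x ∧ ∃ n : ℕ, x ^ (n + 1) ≤ a}

/-- A primary element. -/
def IsPrimary [MultiplicativeLattice L] (i : L) : Prop :=
  i ≠ ⊤ ∧ ∀ a b : L, a * b ≤ i → a ≤ i ∨ b ≤ radical i

/-- A minimal prime element. -/
def IsMinimalPrime [MultiplicativeLattice L] (p : L) : Prop :=
  IsPrime p ∧ ∀ q : L, IsPrime q → q ≤ p → q = p

/-- An `X`-multiplicatively closed subset: a nonempty set `A` of compact elements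
containing `L_* \ X`, with `a₁ ∈ L_* \ X` and `a₂ ∈ A` implying `a₁ * a₂ ∈ A`. -/
def IsXMultClosed [MultiplicativeLattice L] (X A : Set L) : Prop :=
  A.Nonempty ∧ (∀ a ∈ A, IsCompactElement a) ∧
    ({c : L | IsCompactElement c} \ X) ⊆ A ∧
    ∀ a₁ ∈ ({c : L | IsCompactElement c} \ X), ∀ a₂ ∈ A, a₁ * a₂ ∈ A

end MultiplicativeLattice

/-- A c-lattice: a compactly generated multiplicative lattice in which `⊤` is compact
and the product of compact elements is compact. -/
class CLattice (L : Type*) extends MultiplicativeLattice L where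
  compactlyGenerated : ∀ x : L,
    x = sSup {c : L | IsCompactElement c ∧ c ≤ x}
  compact_top : IsCompactElement (⊤ : L)
  compact_mul : ∀ a b : L, IsCompactElement a →
    IsCompactElement b → IsCompactElement (a * b)

open MultiplicativeLattice CompleteLattice

/-! If `i` is an `(j]`-element, a compact `x ≰ j` with `x ^ (n + 1) ≤ i` can be cancelled
`n + 1` times from `x ^ (n + 1) * ⊤ ≤ i`, giving `⊤ ≤ i`; hence `√i ≤ j`. Conversely
`j ≤ √i` for every `i`: a compact `c ≰ √i` has no power below `i`, and a Zorn-maximal element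
above `i` avoiding all powers of `c` is a prime not above `c`, while `j` lies below every prime.
Once `√i = j`, both the `(j]`-element condition and primarity say that `a * b ≤ i` with
`a ≰ j` forces `b ≤ i`. -/

namespace MultiplicativeLattice

variable {L : Type*}

section MultiplicativeLattice

variable [MultiplicativeLattice L]

theorem mul_sup (a b c : L) : a * (b ⊔ c) = a * b ⊔ a * c := by
  simpa only [sSup_insert, sSup_singleton, iSup_insert, iSup_singleton] using mul_sSup a {b, c}

theorem mul_top (a : L) : a * ⊤ = a := by
  rw [← one_eq_top, mul_one]

theorem mul_le_mul_left {b c : L} (h : b ≤ c) (a : L) : a * b ≤ a * c := by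
  rw [← sup_eq_right.mpr h, mul_sup]
  exact le_sup_left

theorem mul_mono {a b c d : L} (hac : a ≤ c) (hbd : b ≤ d) : a * b ≤ c * d :=
  calc a * b ≤ a * d := mul_le_mul_left hbd a
    _ = d * a := mul_comm a d
    _ ≤ d * c := mul_le_mul_left hac d
    _ = c * d := mul_comm d c

theorem mul_le_left (a b : L) : a * b ≤ a :=
  (mul_le_mul_left le_top a).trans (mul_top a).le

theorem mul_le_right (a b : L) : a * b ≤ b :=
  mul_comm b a ▸ mul_le_left b a

theorem sup_mul_sup_le (m a b : L) : (m ⊔ a) * (m ⊔ b) ≤ m ⊔ a * b := by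
  rw [mul_sup]
  refine sup_le (le_sup_of_le_left (mul_le_right _ _)) ?_
  rw [mul_comm, mul_sup, mul_comm b a]
  exact sup_le (le_sup_of_le_left (mul_le_right _ _)) le_sup_right

theorem isPrime_of_maximal_forall_not_pow_le {c m : L}
    (hm : Maximal (fun q => ∀ n : ℕ, ¬ c ^ (n + 1) ≤ q) m) : IsPrime m := by
  refine ⟨fun htop => hm.prop 0 (htop ▸ le_top), fun a b hab => ?_⟩
  by_contra! hcon
  have pow_le_sup : ∀ x, ¬ x ≤ m → ∃ n : ℕ, c ^ (n + 1) ≤ m ⊔ x := fun x hx => by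
    by_contra! hpow
    exact hx (le_sup_right.trans (hm.2 hpow le_sup_left))
  obtain ⟨n, hn⟩ := pow_le_sup a hcon.1
  obtain ⟨k, hk⟩ := pow_le_sup b hcon.2
  apply hm.prop (n + k + 1)
  calc c ^ (n + k + 1 + 1) = c ^ (n + 1) * c ^ (k + 1) := by rw [← pow_add]; ring_nf
    _ ≤ (m ⊔ a) * (m ⊔ b) := mul_mono hn hk
    _ ≤ m ⊔ a * b := sup_mul_sup_le m a b
    _ ≤ m := sup_le le_rfl hab

end MultiplicativeLattice

theorem IsXElement.le_of_pow_mul_le [MultiplicativeLattice L] {X : Set L} {i a b : L}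
    (hi : IsXElement X i) (ha : a ∉ X) (n : ℕ) (h : a ^ n * b ≤ i) : b ≤ i := by
  induction n generalizing b with
  | zero => simpa using h
  | succ n ih => exact hi.2 a b (ih (by rwa [← mul_assoc, ← pow_succ])) ha

theorem IsXElement.radical_le [MultiplicativeLattice L] {i j : L}
    (hi : IsXElement {x | x ≤ j} i) : radical i ≤ j := by
  refine sSup_le fun x ⟨_, n, hxn⟩ => ?_
  by_contra hxj
  exact hi.1 (top_le_iff.mp (hi.le_of_pow_mul_le hxj (n + 1) (by rwa [mul_top])))

theorem isXElement_iff_isPrimary_of_radical_eq [MultiplicativeLattice L] {i j : L}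
    (hrad : radical i = j) : IsXElement {x | x ≤ j} i ↔ IsPrimary i := by
  subst hrad
  refine ⟨fun ⟨hi, hX⟩ => ⟨hi, fun a b hab => ?_⟩,
    fun ⟨hi, hP⟩ => ⟨hi, fun a b hab ha => ?_⟩⟩
  · by_cases hb : b ≤ radical i
    · exact .inr hb
    · exact .inl (hX b a (mul_comm a b ▸ hab) hb)
  · exact (hP b a (mul_comm a b ▸ hab)).resolve_right ha

section CLattice

variable [CLattice L]

theorem isCompactElement_pow_succ {c : L} (hc : IsCompactElement c) (n : ℕ) :
    IsCompactElement (c ^ (n + 1)) := by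
  induction n with
  | zero => simpa using hc
  | succ n ih => exact pow_succ c (n + 1) ▸ CLattice.compact_mul _ _ ih hc

theorem exists_isPrime_le_not_le {c i : L} (hc : IsCompactElement c)
    (h : ∀ n : ℕ, ¬ c ^ (n + 1) ≤ i) : ∃ p, IsPrime p ∧ i ≤ p ∧ ¬ c ≤ p := by
  let S : Set L := {q | ∀ n : ℕ, ¬ c ^ (n + 1) ≤ q}
  -- compactness of the powers of `c` is what makes `S` closed under joins of chains
  have chain_ub :
      ∀ C ⊆ S, IsChain (· ≤ ·) C → ∀ y ∈ C, ∃ ub ∈ S, ∀ z ∈ C, z ≤ ub := by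
    intro C hCS hC y hy
    refine ⟨sSup C, fun n hn => ?_, fun z hz => le_sSup hz⟩
    obtain ⟨x, hxC, hx⟩ := (isCompactElement_iff_le_of_directed_sSup_le (k := c ^ (n + 1))).mp
      (isCompactElement_pow_succ hc n) C ⟨y, hy⟩ hC.directedOn hn
    exact hCS hxC n hx
  obtain ⟨m, him, hm⟩ := zorn_le_nonempty₀ S chain_ub i h
  refine ⟨m, isPrime_of_maximal_forall_not_pow_le hm, him, fun hcm => ?_⟩
  exact hm.prop 0 (by simpa using hcm)

theorem sInf_isPrime_le_radical (i : L) : sInf {p : L | IsPrime p} ≤ radical i := by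
  rw [CLattice.compactlyGenerated (sInf _)]
  refine sSup_le fun c ⟨hc, hcj⟩ => ?_
  by_contra hcr
  obtain ⟨p, hp, -, hcp⟩ :=
    exists_isPrime_le_not_le hc fun n hn => hcr (le_sSup ⟨hc, n, hn⟩)
  exact hcp (hcj.trans (sInf_le hp))

end CLattice

end MultiplicativeLattice

theorem stmt15_general {L : Type*} [CLattice L] (j : L) (hj : j = sInf {p : L | IsPrime p})
    (i : L) :
    IsXElement {x : L | x ≤ j} i ↔ (IsPrimary i ∧ radical i = j) := by
  constructor
  · intro hX
    have hrad : radical i = j := le_antisymm hX.radical_le (hj ▸ sInf_isPrime_le_radical i)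
    exact ⟨(isXElement_iff_isPrimary_of_radical_eq hrad).mp hX, hrad⟩
  · rintro ⟨hP, hrad⟩
    exact (isXElement_iff_isPrimary_of_radical_eq hrad).mpr hP

theorem stmt15 {L : Type*} [CLattice L] (j : L) (hj : j = sInf {p : L | IsPrime p})
    (i : L) (hi : i ≠ ⊤) :
    IsXElement {x : L | x ≤ j} i ↔ (IsPrimary i ∧ radical i = j) :=
  stmt15_general j hj i
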